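/- arXiv:math/0204360 — 2 statements merged into one kernel-verified Lean document; each statement's English description precedes it below -/
import Mathlib

section
/- (p-adic stationary phase formula, univariate case) Let f ∈ ℤ_p[x] \ pℤ_p[x] be non-constant, let ν(f̄) be the number of z ∈ 𝔽_p with f̄(z) ≠ 0, let δ(f̄) be the number of simple roots of f̄ in 𝔽_p, and let S ⊆ {0,…,p−1} be the set of lifts of roots of f̄ of multiplicity ≥ 2. For ξ ∈ S let e_ξ be the minimal p-adic valuation of the coefficients of f(ξ + px) and f_ξ(x) = p^{−e_ξ} f(ξ + px). Then for Re(s) > 0: Z(s,f) = p^{−1} ν(f̄) + δ(f̄) (1 − p^{−1}) p^{−1−s}/(1 − p^{−1−s}) + Σ_{ξ ∈ S} p^{−1 − e_ξ s} Z(s, f_ξ). -/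
open MeasureTheory Polynomial
open scoped ENNReal NNReal

noncomputable instance {p : ℕ} [Fact p.Prime] : MeasurableSpace ℤ_[p] := borel _
instance {p : ℕ} [Fact p.Prime] : BorelSpace ℤ_[p] := ⟨rfl⟩

namespace StationaryPhaseAux

variable {p : ℕ} [hp : Fact p.Prime]

lemma pZ_ne : ((p : ℤ_[p])) ≠ 0 :=
  Nat.cast_ne_zero.mpr hp.1.ne_zero

lemma toZMod_eq_zero {x : ℤ_[p]} : PadicInt.toZMod x = 0 ↔ (p : ℤ_[p]) ∣ x := by
  rw [← RingHom.mem_ker, PadicInt.ker_toZMod, PadicInt.maximalIdeal_eq_span_p,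
    Ideal.mem_span_singleton]

lemma norm_eq_one {x : ℤ_[p]} (h : PadicInt.toZMod x ≠ 0) : ‖x‖ = 1 := by
  refine le_antisymm (PadicInt.norm_le_one x) (not_lt.1 fun hlt => ?_)
  exact h (toZMod_eq_zero.2 ((PadicInt.norm_lt_one_iff_dvd x).1 hlt))

lemma norm_lt_one_of {x : ℤ_[p]} (h : PadicInt.toZMod x = 0) : ‖x‖ < 1 :=
  (PadicInt.norm_lt_one_iff_dvd x).2 (toZMod_eq_zero.1 h)

lemma toZMod_eval (g : Polynomial ℤ_[p]) (x : ℤ_[p]) :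
    PadicInt.toZMod (g.eval x) = (g.map PadicInt.toZMod).eval (PadicInt.toZMod x) := by
  rw [eval_map, eval₂_at_apply]

lemma toZMod_natval (a : ZMod p) : PadicInt.toZMod ((a.val : ℤ_[p])) = a := by
  haveI : NeZero p := ⟨hp.1.ne_zero⟩
  rw [map_natCast]
  simp [ZMod.natCast_val, ZMod.cast_id]

lemma toZMod_p : PadicInt.toZMod ((p : ℤ_[p])) = 0 := by
  rw [map_natCast]
  exact ZMod.natCast_self p

lemma exists_lift (x : ℤ_[p]) :
    ∃ c : ℤ_[p], x = ((PadicInt.toZMod x).val : ℤ_[p]) + p * c := by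
  have h : PadicInt.toZMod (x - ((PadicInt.toZMod x).val : ℤ_[p])) = 0 := by
    rw [map_sub, toZMod_natval, sub_self]
  obtain ⟨c, hc⟩ := toZMod_eq_zero.1 h
  exact ⟨c, by linear_combination hc⟩

/-- The affine map `y ↦ a + p y`. -/
noncomputable def T (a : ZMod p) : ℤ_[p] → ℤ_[p] :=
  fun y => ((a.val : ℤ_[p])) + (p : ℤ_[p]) * y

lemma T_continuous (a : ZMod p) : Continuous (T a) :=
  continuous_const.add (continuous_const.mul continuous_id)

lemma T_measurable (a : ZMod p) : Measurable (T a) :=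
  (T_continuous a).measurable

lemma toZMod_T (a : ZMod p) (y : ℤ_[p]) : PadicInt.toZMod (T a y) = a := by
  rw [T, map_add, map_mul, toZMod_natval, toZMod_p, zero_mul, add_zero]

section Measure

variable (μ : Measure ℤ_[p]) [μ.IsAddHaarMeasure]

lemma sum_map (hμ : μ Set.univ = 1) :
    (∑ a : ZMod p, μ.map (T a)) = ((p : ℝ≥0∞)) • μ := by
  haveI : NeZero p := ⟨hp.1.ne_zero⟩
  haveI : IsFiniteMeasure μ := ⟨by rw [hμ]; exact ENNReal.one_lt_top⟩
  set ν : Measure ℤ_[p] := ∑ a : ZMod p, μ.map (T a) with hν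
  have hshift : ∀ (t : ℤ_[p]) (a : ZMod p), ∃ c : ℤ_[p],
      (fun x => t + x) ∘ T a = T (PadicInt.toZMod t + a) ∘ (fun y => c + y) := by
    intro t a
    obtain ⟨c, hc⟩ := exists_lift (t + ((a.val : ℤ_[p])))
    have h2 : PadicInt.toZMod (t + ((a.val : ℤ_[p]))) = PadicInt.toZMod t + a := by
      rw [map_add, toZMod_natval]
    refine ⟨c, funext fun y => ?_⟩
    simp only [Function.comp_apply, T]
    rw [← h2]
    calc t + (((a.val : ℤ_[p])) + (p : ℤ_[p]) * y)
        = (t + ((a.val : ℤ_[p]))) + (p : ℤ_[p]) * y := by ring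
      _ = (((PadicInt.toZMod (t + ((a.val : ℤ_[p])))).val : ℤ_[p]) + (p : ℤ_[p]) * c)
            + (p : ℤ_[p]) * y := by rw [← hc]
      _ = ((PadicInt.toZMod (t + ((a.val : ℤ_[p])))).val : ℤ_[p])
            + (p : ℤ_[p]) * (c + y) := by ring
  have hν_apply : ∀ (A : Set ℤ_[p]), MeasurableSet A →
      ν A = ∑ a : ZMod p, μ ((T a) ⁻¹' A) := by
    intro A hA
    rw [hν, Measure.finset_sum_apply]
    exact Finset.sum_congr rfl fun a _ => Measure.map_apply (T_measurable a) hA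
  have hν_univ : ν Set.univ = (p : ℝ≥0∞) := by
    rw [hν_apply Set.univ MeasurableSet.univ]
    simp only [Set.preimage_univ, hμ]
    rw [Finset.sum_const, Finset.card_univ, ZMod.card, nsmul_eq_mul, mul_one]
  haveI : IsFiniteMeasure ν := ⟨by rw [hν_univ]; exact ENNReal.natCast_lt_top p⟩
  haveI : ν.IsAddLeftInvariant := by
    refine ⟨fun t => ?_⟩
    ext A hA
    rw [Measure.map_apply (measurable_const_add t) hA,
      hν_apply _ ((measurable_const_add t) hA), hν_apply _ hA]
    have hterm : ∀ a : ZMod p,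
        μ ((T a) ⁻¹' ((fun x => t + x) ⁻¹' A)) = μ ((T (PadicInt.toZMod t + a)) ⁻¹' A) := by
      intro a
      obtain ⟨c, hc⟩ := hshift t a
      have hpre : (T a) ⁻¹' ((fun x => t + x) ⁻¹' A)
          = (fun y => c + y) ⁻¹' ((T (PadicInt.toZMod t + a)) ⁻¹' A) := by
        rw [← Set.preimage_comp, hc, Set.preimage_comp]
      rw [hpre]
      exact measure_preimage_add μ c _
    rw [Finset.sum_congr rfl fun a _ => hterm a]
    exact Fintype.sum_bijective (fun a => PadicInt.toZMod t + a)
      (Equiv.addLeft (PadicInt.toZMod t)).bijective _ _ (fun a => rfl)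
  have heq := Measure.isAddLeftInvariant_eq_smul ν μ
  have hscal : ((Measure.addHaarScalarFactor ν μ : ℝ≥0) : ℝ≥0∞) = (p : ℝ≥0∞) := by
    have h2 := congrArg (fun m : Measure ℤ_[p] => m Set.univ) heq
    simp only [Measure.smul_apply] at h2
    rw [hν_univ, hμ, ENNReal.smul_def, smul_eq_mul, mul_one] at h2
    exact h2.symm
  rw [heq]
  ext A hA
  rw [Measure.smul_apply, Measure.smul_apply, ENNReal.smul_def, smul_eq_mul, smul_eq_mul, hscal]

lemma integral_classes (hμ : μ Set.univ = 1) (h : ℤ_[p] → ℂ) (hh : Continuous h) :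
    ∑ a : ZMod p, (∫ y, h (((a.val : ℤ_[p])) + (p : ℤ_[p]) * y) ∂μ)
      = (p : ℝ) • ∫ x, h x ∂μ := by
  haveI : IsFiniteMeasure μ := ⟨by rw [hμ]; exact ENNReal.one_lt_top⟩
  have hint : ∀ (m : Measure ℤ_[p]) [IsFiniteMeasure m], Integrable h m := by
    intro m _
    exact hh.integrable_of_hasCompactSupport (HasCompactSupport.of_compactSpace h)
  calc ∑ a : ZMod p, (∫ y, h (((a.val : ℤ_[p])) + (p : ℤ_[p]) * y) ∂μ)
      = ∑ a : ZMod p, ∫ x, h x ∂(μ.map (T a)) := by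
        refine Finset.sum_congr rfl fun a _ => ?_
        exact (integral_map (T_measurable a).aemeasurable hh.aestronglyMeasurable).symm
    _ = ∫ x, h x ∂(∑ a : ZMod p, μ.map (T a)) := by
        refine (integral_finset_sum_measure fun a _ => ?_).symm
        exact hint _
    _ = ∫ x, h x ∂(((p : ℝ≥0∞)) • μ) := by rw [sum_map μ hμ]
    _ = ((p : ℝ≥0∞)).toReal • ∫ x, h x ∂μ := integral_smul_measure _ _
    _ = (p : ℝ) • ∫ x, h x ∂μ := by rw [ENNReal.toReal_natCast]

/-- The "ball" `p^n ℤ_p`. -/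
def B (n : ℕ) : Set ℤ_[p] := {x : ℤ_[p] | (p : ℤ_[p]) ^ n ∣ x}

lemma B_norm (n : ℕ) : B (p := p) n = {x : ℤ_[p] | ‖x‖ ≤ ((p : ℝ)) ^ (-(n : ℤ))} := by
  ext x
  rw [B, Set.mem_setOf_eq, Set.mem_setOf_eq, PadicInt.norm_le_pow_iff_mem_span_pow,
    Ideal.mem_span_singleton]

lemma B_measurable (n : ℕ) : MeasurableSet (B (p := p) n) := by
  rw [B_norm]
  exact (isClosed_le continuous_norm continuous_const).measurableSet

lemma B_antitone {n : ℕ} : B (p := p) (n + 1) ⊆ B n := by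
  intro x hx
  exact dvd_trans (pow_dvd_pow _ (Nat.le_succ n)) hx

lemma meas_B (hμ : μ Set.univ = 1) (n : ℕ) :
    μ (B (p := p) n) = ((p : ℝ≥0∞))⁻¹ ^ n := by
  haveI : NeZero p := ⟨hp.1.ne_zero⟩
  induction n with
  | zero =>
    have hB0 : B (p := p) 0 = Set.univ := by
      ext x; simp [B]
    rw [hB0, hμ, pow_zero]
  | succ n ih =>
    have hsum := congrArg (fun m : Measure ℤ_[p] => m (B (p := p) (n + 1))) (sum_map μ hμ)
    simp only [Measure.smul_apply, ENNReal.smul_def, smul_eq_mul] at hsum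
    rw [Measure.finset_sum_apply] at hsum
    have hterm : ∀ a : ZMod p,
        (μ.map (T a)) (B (p := p) (n + 1))
          = if a = 0 then μ (B (p := p) n) else 0 := by
      intro a
      rw [Measure.map_apply (T_measurable a) (B_measurable (n + 1))]
      by_cases ha : a = 0
      · subst ha
        have hpre : (T (0 : ZMod p)) ⁻¹' (B (p := p) (n + 1)) = B (p := p) n := by
          ext y
          simp only [Set.mem_preimage, T, B, Set.mem_setOf_eq]
          rw [ZMod.val_zero, Nat.cast_zero, zero_add, pow_succ']
          exact mul_dvd_mul_iff_left (pZ_ne (p := p))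
        rw [hpre, if_pos rfl]
      · rw [if_neg ha]
        have hpre : (T a) ⁻¹' (B (p := p) (n + 1)) = ∅ := by
          ext y
          simp only [Set.mem_preimage, B, Set.mem_setOf_eq, Set.mem_empty_iff_false, iff_false]
          intro hdvd
          have hpd : (p : ℤ_[p]) ∣ T a y :=
            dvd_trans (dvd_pow_self _ (Nat.succ_ne_zero n)) hdvd
          have h3 := toZMod_T a y
          rw [toZMod_eq_zero.2 hpd] at h3
          exact ha h3.symm
        rw [hpre, measure_empty]
    rw [Finset.sum_congr rfl fun a _ => hterm a, Finset.sum_ite_eq' Finset.univ (0 : ZMod p),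
      if_pos (Finset.mem_univ _), ih] at hsum
    have hp0 : (p : ℝ≥0∞) ≠ 0 := by
      exact_mod_cast Nat.cast_ne_zero.mpr hp.1.ne_zero
    have hptop : (p : ℝ≥0∞) ≠ ⊤ := ENNReal.natCast_ne_top p
    calc μ (B (p := p) (n + 1))
        = (p : ℝ≥0∞)⁻¹ * ((p : ℝ≥0∞) * μ (B (p := p) (n + 1))) := by
          rw [← mul_assoc, ENNReal.inv_mul_cancel hp0 hptop, one_mul]
      _ = (p : ℝ≥0∞)⁻¹ * (p : ℝ≥0∞)⁻¹ ^ n := by rw [← hsum]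
      _ = (p : ℝ≥0∞)⁻¹ ^ (n + 1) := by rw [pow_succ']

lemma meas_zero (hμ : μ Set.univ = 1) : μ ({(0 : ℤ_[p])}) = 0 := by
  have hub : ∀ n : ℕ, μ ({(0 : ℤ_[p])}) ≤ ((p : ℝ≥0∞))⁻¹ ^ n := by
    intro n
    rw [← meas_B μ hμ n]
    refine measure_mono ?_
    intro x hx
    rw [Set.mem_singleton_iff] at hx
    subst hx
    exact dvd_zero _
  have hlt1 : ((p : ℝ≥0∞))⁻¹ < 1 := by
    rw [ENNReal.inv_lt_one]
    exact_mod_cast hp.1.one_lt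
  have htend := ENNReal.tendsto_pow_atTop_nhds_zero_of_lt_one hlt1
  exact le_antisymm (ge_of_tendsto htend (Filter.Eventually.of_forall hub)) (zero_le)

end Measure

/-! ### complex power helper lemmas -/

lemma cpow_ofReal_pow (x : ℝ) (hx : 0 ≤ x) (s : ℂ) :
    ∀ n : ℕ, (((x ^ n : ℝ)) : ℂ) ^ s = ((((x : ℝ)) : ℂ) ^ s) ^ n
  | 0 => by simp
  | n + 1 => by
    rw [pow_succ, Complex.ofReal_mul,
      Complex.mul_cpow_ofReal_nonneg (pow_nonneg hx n) hx, cpow_ofReal_pow x hx s n, pow_succ]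

omit hp in
lemma cpow_key_q (s : ℂ) : ((((p : ℝ)⁻¹ : ℝ)) : ℂ) ^ s = (((p : ℂ)) ^ s)⁻¹ := by
  have hcast : ((((p : ℝ)⁻¹ : ℝ)) : ℂ) = ((p : ℂ))⁻¹ := by push_cast; ring
  have harg : ((p : ℂ)).arg ≠ Real.pi := by
    rw [Complex.natCast_arg]
    exact Ne.symm Real.pi_ne_zero
  rw [hcast, Complex.inv_cpow _ _ harg]

lemma cpow_neg_one_sub (s : ℂ) : ((p : ℂ)) ^ (-1 - s) = ((p : ℂ))⁻¹ * (((p : ℂ)) ^ s)⁻¹ := by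
  have hp0 : ((p : ℂ)) ≠ 0 := Nat.cast_ne_zero.mpr hp.1.ne_zero
  rw [sub_eq_add_neg, Complex.cpow_add _ _ hp0, Complex.cpow_neg_one, Complex.cpow_neg]

lemma cpow_neg_one_sub_nat (s : ℂ) (e : ℕ) :
    ((p : ℂ)) ^ (-1 - (e : ℂ) * s) = ((p : ℂ))⁻¹ * ((((p : ℂ)) ^ s)⁻¹) ^ e := by
  have hp0 : ((p : ℂ)) ≠ 0 := Nat.cast_ne_zero.mpr hp.1.ne_zero
  rw [sub_eq_add_neg, Complex.cpow_add _ _ hp0, Complex.cpow_neg_one, Complex.cpow_neg,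
    Complex.cpow_nat_mul, inv_pow]

lemma norm_cpow_lt (s : ℂ) (hs : 0 < s.re) : ‖((p : ℂ)) ^ (-1 - s)‖ < 1 := by
  have hp1 : (1 : ℝ) < (p : ℝ) := by exact_mod_cast hp.1.one_lt
  have hcast : ((p : ℂ)) = (((p : ℝ)) : ℂ) := by push_cast; rfl
  rw [hcast, Complex.norm_cpow_eq_rpow_re_of_pos (by linarith)]
  apply Real.rpow_lt_one_of_one_lt_of_neg hp1
  simp only [Complex.sub_re, Complex.neg_re, Complex.one_re]
  linarith

/-! ### the integral of `‖y‖^s` -/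

section NormIntegral

variable (μ : Measure ℤ_[p]) [μ.IsAddHaarMeasure]

lemma integral_norm_cpow (hμ : μ Set.univ = 1) (s : ℂ) (hs : 0 < s.re) :
    (∫ y : ℤ_[p], ((‖y‖ : ℝ) : ℂ) ^ s ∂μ)
      = (1 - (p : ℂ)⁻¹) / (1 - (p : ℂ) ^ (-1 - s)) := by
  haveI : IsFiniteMeasure μ := ⟨by rw [hμ]; exact ENNReal.one_lt_top⟩
  have hp1 : (1 : ℝ) < (p : ℝ) := by exact_mod_cast hp.1.one_lt
  have hppos : (0 : ℝ) < (p : ℝ)⁻¹ := by positivity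
  have hplt : (p : ℝ)⁻¹ < 1 := by
    rw [inv_lt_one_iff₀]; right; exact hp1
  set g : ℤ_[p] → ℂ := fun y => ((‖y‖ : ℝ) : ℂ) ^ s with hg
  have hgc : Continuous g :=
    (Complex.continuous_ofReal_cpow_const hs).comp continuous_norm
  have hgint : Integrable g μ :=
    hgc.integrable_of_hasCompactSupport (HasCompactSupport.of_compactSpace g)
  set S : ℕ → Set ℤ_[p] := fun n => {y : ℤ_[p] | ‖y‖ = ((p : ℝ)⁻¹) ^ n} with hS
  have hSmeas : ∀ n, MeasurableSet (S n) := fun n =>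
    (isClosed_eq continuous_norm continuous_const).measurableSet
  have hpow_eq : ∀ n : ℕ, ((p : ℝ)) ^ (-(n : ℤ)) = ((p : ℝ)⁻¹) ^ n := by
    intro n
    rw [zpow_neg, zpow_natCast, inv_pow]
  have hSdiff : ∀ n, S n = B (p := p) n \ B (p := p) (n + 1) := by
    intro n
    ext y
    simp only [hS, Set.mem_setOf_eq, Set.mem_diff, B_norm, hpow_eq]
    constructor
    · intro h
      refine ⟨le_of_eq h, fun hle => ?_⟩
      have hlt : ((p : ℝ)⁻¹) ^ (n + 1) < ((p : ℝ)⁻¹) ^ n :=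
        pow_lt_pow_right_of_lt_one₀ hppos hplt (Nat.lt_succ_self n)
      rw [h] at hle
      exact absurd hle (not_le.2 hlt)
    · rintro ⟨h1, h2⟩
      have hiff := PadicInt.norm_le_pow_iff_norm_lt_pow_add_one y (-((n : ℤ) + 1))
      have harith : (-((n : ℤ) + 1)) + 1 = -(n : ℤ) := by ring
      rw [harith] at hiff
      have harith2 : (-((n : ℤ) + 1)) = (-(((n+1) : ℕ) : ℤ)) := by push_cast; ring
      rw [harith2, hpow_eq, hpow_eq] at hiff
      have h3 := (not_iff_not.2 hiff).1 h2
      push_neg at h3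
      exact le_antisymm h1 h3
  have hptopinv : ((p : ℝ≥0∞))⁻¹ ≠ ⊤ :=
    ENNReal.inv_ne_top.2 (by exact_mod_cast Nat.cast_ne_zero.mpr hp.1.ne_zero)
  have hmeasS : ∀ n, μ (S n) = ((p : ℝ≥0∞))⁻¹ ^ n - ((p : ℝ≥0∞))⁻¹ ^ (n + 1) := by
    intro n
    rw [hSdiff n, measure_diff B_antitone ((B_measurable (n + 1)).nullMeasurableSet)
      (by rw [meas_B μ hμ]; exact ENNReal.pow_ne_top hptopinv),
      meas_B μ hμ, meas_B μ hμ]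
  have hStoReal : ∀ n, (μ (S n)).toReal = ((p : ℝ)⁻¹) ^ n * (1 - (p : ℝ)⁻¹) := by
    intro n
    have hle : ((p : ℝ≥0∞))⁻¹ ^ (n + 1) ≤ ((p : ℝ≥0∞))⁻¹ ^ n := by
      rw [pow_succ]
      calc ((p : ℝ≥0∞))⁻¹ ^ n * ((p : ℝ≥0∞))⁻¹
          ≤ ((p : ℝ≥0∞))⁻¹ ^ n * 1 := by
            gcongr
            exact le_of_lt (ENNReal.inv_lt_one.2 (by exact_mod_cast hp.1.one_lt))
        _ = ((p : ℝ≥0∞))⁻¹ ^ n := mul_one _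
    rw [hmeasS n, ENNReal.toReal_sub_of_le hle (ENNReal.pow_ne_top hptopinv),
      ENNReal.toReal_pow, ENNReal.toReal_pow, ENNReal.toReal_inv, ENNReal.toReal_natCast]
    ring
  have hSunion : (⋃ n, S n) = {y : ℤ_[p] | y ≠ 0} := by
    ext y
    simp only [Set.mem_iUnion, hS, Set.mem_setOf_eq]
    constructor
    · rintro ⟨n, hn⟩ hy0
      rw [hy0, norm_zero] at hn
      have hpos : (0 : ℝ) < ((p : ℝ)⁻¹) ^ n := pow_pos hppos n
      rw [← hn] at hpos
      exact lt_irrefl _ hpos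
    · intro hy
      refine ⟨y.valuation, ?_⟩
      rw [PadicInt.norm_eq_zpow_neg_valuation hy, ← hpow_eq]
  have hunion_ae : (Set.univ : Set ℤ_[p]) =ᵐ[μ] ⋃ n, S n := by
    rw [MeasureTheory.ae_eq_set]
    constructor
    · have hcompl : (Set.univ : Set ℤ_[p]) \ (⋃ n, S n) = {0} := by
        rw [hSunion]
        ext y
        simp [not_not]
      rw [hcompl]
      exact meas_zero μ hμ
    · rw [Set.diff_eq_empty.2 (Set.subset_univ _)]
      exact measure_empty
  have hdisj : Pairwise (Function.onFun Disjoint S) := by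
    intro m n hmn
    refine Set.disjoint_left.2 ?_
    intro y hym hyn
    simp only [hS, Set.mem_setOf_eq] at hym hyn
    have heq2 : ((p : ℝ)⁻¹) ^ m = ((p : ℝ)⁻¹) ^ n := by rw [← hym, hyn]
    rcases lt_trichotomy m n with hlt | heq3 | hlt
    · exact absurd heq2 (ne_of_gt (pow_lt_pow_right_of_lt_one₀ hppos hplt hlt))
    · exact hmn heq3
    · exact absurd heq2 (ne_of_lt (pow_lt_pow_right_of_lt_one₀ hppos hplt hlt))
  have hr_eq : ((p : ℂ)) ^ (-1 - s) = (p : ℂ)⁻¹ * ((((p : ℝ)⁻¹ : ℝ)) : ℂ) ^ s := by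
    rw [cpow_neg_one_sub, cpow_key_q]
  calc ∫ y, g y ∂μ
      = ∫ y in Set.univ, g y ∂μ := setIntegral_univ.symm
    _ = ∫ y in ⋃ n, S n, g y ∂μ := setIntegral_congr_set hunion_ae
    _ = ∑' n, ∫ y in S n, g y ∂μ := integral_iUnion hSmeas hdisj hgint.integrableOn
    _ = ∑' n : ℕ, (1 - (p : ℂ)⁻¹) * (((p : ℂ)) ^ (-1 - s)) ^ n := by
        refine tsum_congr fun n => ?_
        have h1 : ∫ y in S n, g y ∂μ
            = ∫ _ in S n, ((((p : ℝ)⁻¹ ^ n : ℝ)) : ℂ) ^ s ∂μ := by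
          refine setIntegral_congr_fun (hSmeas n) fun y hy => ?_
          simp only [hS, Set.mem_setOf_eq] at hy
          simp only [hg]
          rw [hy]
        rw [h1, setIntegral_const, measureReal_def, hStoReal n,
          cpow_ofReal_pow _ (le_of_lt hppos) s n, hr_eq, Complex.real_smul]
        push_cast
        ring
    _ = (1 - (p : ℂ)⁻¹) * (1 - ((p : ℂ)) ^ (-1 - s))⁻¹ := by
        rw [tsum_mul_left, tsum_geometric_of_norm_lt_one (norm_cpow_lt s hs)]
    _ = (1 - (p : ℂ)⁻¹) / (1 - ((p : ℂ)) ^ (-1 - s)) := (div_eq_mul_inv _ _).symm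

end NormIntegral

/-! ### polynomial lemmas -/

lemma coeff_comp_C_mul_X (q : Polynomial ℤ_[p]) (c : ℤ_[p]) (n : ℕ) :
    (q.comp (C c * X)).coeff n = q.coeff n * c ^ n := by
  induction q using Polynomial.induction_on' with
  | add f g hf hg => rw [add_comp, coeff_add, hf, hg, coeff_add, add_mul]
  | monomial k a =>
    have hmon : (monomial k a).comp (C c * X) = C (a * c ^ k) * X ^ k := by
      rw [monomial_comp, mul_pow, ← C_pow, ← mul_assoc, ← C_mul]
    rw [hmon, coeff_C_mul, coeff_X_pow, coeff_monomial]
    by_cases h : n = k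
    · subst h; simp
    · simp [h, Ne.symm h]

/-- The key local analysis at a simple root: `‖f(ξ + p y)‖ = p⁻¹ ‖y - β‖`. -/
lemma simple_root_norm (f : Polynomial ℤ_[p]) (ξ : ZMod p)
    (h0 : (f.map PadicInt.toZMod).eval ξ = 0)
    (h1 : (derivative (f.map PadicInt.toZMod)).eval ξ ≠ 0) :
    ∃ β : ℤ_[p], ∀ y : ℤ_[p],
      ‖f.eval (((ξ.val : ℤ_[p])) + (p : ℤ_[p]) * y)‖ = (p : ℝ)⁻¹ * ‖y - β‖ := by
  set ξv : ℤ_[p] := ((ξ.val : ℤ_[p])) with hξv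
  have hτξ : PadicInt.toZMod ξv = ξ := toZMod_natval ξ
  have hTx : ∀ y : ℤ_[p], PadicInt.toZMod (ξv + (p : ℤ_[p]) * y) = ξ := by
    intro y
    rw [map_add, map_mul, hτξ, toZMod_p, zero_mul, add_zero]
  have hder : ∀ x : ℤ_[p], PadicInt.toZMod x = ξ →
      PadicInt.toZMod (f.derivative.eval x) ≠ 0 := by
    intro x hx
    rw [toZMod_eval, hx, ← derivative_map]
    exact h1
  obtain ⟨c', hc'⟩ : (p : ℤ_[p]) ∣ f.eval ξv := by
    apply toZMod_eq_zero.1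
    rw [toZMod_eval, hτξ, h0]
  set T₀ : Polynomial ℤ_[p] := taylor ξv f with hT
  set D : Polynomial ℤ_[p] := T₀.divX with hD
  set g : Polynomial ℤ_[p] := X * (D.comp (C (p : ℤ_[p]) * X)) + C c' with hg
  have hcomp : f.comp (C ξv + C (p : ℤ_[p]) * X) = T₀.comp (C (p : ℤ_[p]) * X) := by
    conv_rhs => rw [hT, taylor_apply]
    rw [comp_assoc]
    congr 1
    rw [add_comp, X_comp, C_comp]
    ring
  have hT0 : T₀ = X * D + C ((p : ℤ_[p]) * c') := by
    have h00 : T₀.coeff 0 = (p : ℤ_[p]) * c' := by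
      rw [hT, taylor_coeff_zero, hc']
    rw [← h00, hD]
    exact (X_mul_divX_add T₀).symm
  have hkeyC : C (p : ℤ_[p]) * g = f.comp (C ξv + C (p : ℤ_[p]) * X) := by
    rw [hcomp]
    conv_rhs => rw [hT0]
    rw [add_comp, mul_comp, X_comp, C_comp, hg, C_mul]
    ring
  have heval : ∀ y : ℤ_[p], f.eval (ξv + (p : ℤ_[p]) * y) = (p : ℤ_[p]) * g.eval y := by
    intro y
    have h := congrArg (eval y) hkeyC
    simp only [eval_mul, eval_C, eval_comp, eval_add, eval_X] at h
    exact h.symm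
  have hCp : (C ((p : ℤ_[p])) : Polynomial ℤ_[p]) ≠ 0 := C_ne_zero.mpr (pZ_ne (p := p))
  have hderg : derivative g = f.derivative.comp (C ξv + C (p : ℤ_[p]) * X) := by
    apply mul_left_cancel₀ hCp
    have h := congrArg derivative hkeyC
    rw [derivative_C_mul] at h
    rw [h, derivative_comp]
    have hd2 : derivative (C ξv + C ((p : ℤ_[p])) * X) = C ((p : ℤ_[p])) := by
      simp
    rw [hd2]
  have hnormder : ∀ y : ℤ_[p], ‖(derivative g).eval y‖ = 1 := by
    intro y
    rw [hderg]
    have h2 : (f.derivative.comp (C ξv + C (p : ℤ_[p]) * X)).eval y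
        = f.derivative.eval (ξv + (p : ℤ_[p]) * y) := by
      simp [eval_comp]
    rw [h2]
    exact norm_eq_one (hder _ (hTx y))
  -- Newton point
  have hu : IsUnit (f.derivative.eval ξv) :=
    PadicInt.isUnit_iff.2 (norm_eq_one (hder ξv hτξ))
  obtain ⟨v, hv⟩ := hu.exists_right_inv
  set a : ℤ_[p] := -(c' * v) with ha
  obtain ⟨k, hk⟩ := f.binomExpansion ξv ((p : ℤ_[p]) * a)
  have hz : f.eval ξv + f.derivative.eval ξv * ((p : ℤ_[p]) * a) = 0 := by
    rw [hc', ha]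
    linear_combination (-(p : ℤ_[p]) * c') * hv
  have heva : f.eval (ξv + (p : ℤ_[p]) * a) = k * ((p : ℤ_[p]) * a) ^ 2 := by
    rw [hk, hz, zero_add]
  have hga : g.eval a = (p : ℤ_[p]) * (k * a ^ 2) := by
    apply mul_left_cancel₀ (pZ_ne (p := p))
    rw [← heval a, heva]
    ring
  have hga_norm : ‖g.eval a‖ < 1 := by
    have hp1 : (1 : ℝ) < (p : ℝ) := by exact_mod_cast hp.1.one_lt
    calc ‖g.eval a‖ = ‖(p : ℤ_[p])‖ * ‖k * a ^ 2‖ := by rw [hga, norm_mul]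
      _ ≤ ‖(p : ℤ_[p])‖ * 1 := by
          gcongr
          exact PadicInt.norm_le_one _
      _ = (p : ℝ)⁻¹ := by rw [mul_one, PadicInt.norm_p]
      _ < 1 := by rw [inv_lt_one_iff₀]; right; exact hp1
  have hga2 : ‖g.eval a‖ < ‖(derivative g).eval a‖ ^ 2 := by
    rw [hnormder a, one_pow]
    exact hga_norm
  obtain ⟨β, hβ0, -, -, -⟩ := hensels_lemma (hnorm := hga2)
  set h : Polynomial ℤ_[p] := g /ₘ (X - C β) with hh
  have hfac : g = h * (X - C β) := by
    rw [hh, mul_comm]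
    exact (mul_divByMonic_eq_iff_isRoot.2 hβ0).symm
  have hgcoeff : ∀ n : ℕ, 2 ≤ n → PadicInt.toZMod (g.coeff n) = 0 := by
    intro n hn
    obtain ⟨m, rfl⟩ : ∃ m, n = m + 2 := ⟨n - 2, by omega⟩
    rw [hg, coeff_add, coeff_C, if_neg (by omega : ¬ (m + 2 = 0)), add_zero,
      show m + 2 = (m + 1) + 1 from rfl, coeff_X_mul, coeff_comp_C_mul_X,
      map_mul, map_pow, toZMod_p, zero_pow (by omega : m + 1 ≠ 0), mul_zero]
  have hcoeffrel : ∀ n : ℕ, h.coeff n = g.coeff (n + 1) + h.coeff (n + 1) * β := by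
    intro n
    have h2 : (h * (X - C β)).coeff (n + 1) = h.coeff n - h.coeff (n + 1) * β :=
      coeff_mul_X_sub_C
    rw [← hfac] at h2
    linear_combination -h2
  have hhcoeff : ∀ n : ℕ, 1 ≤ n → PadicInt.toZMod (h.coeff n) = 0 := by
    have key : ∀ m n : ℕ, 1 ≤ n → h.natDegree < n + m → PadicInt.toZMod (h.coeff n) = 0 := by
      intro m
      induction m with
      | zero =>
        intro n hn hd
        rw [coeff_eq_zero_of_natDegree_lt (by omega), map_zero]
      | succ m ih =>
        intro n hn hd
        rcases lt_or_ge h.natDegree n with hcase | hcase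
        · rw [coeff_eq_zero_of_natDegree_lt hcase, map_zero]
        · rw [hcoeffrel n, map_add, map_mul, hgcoeff (n + 1) (by omega),
            ih (n + 1) (by omega) (by omega), zero_add, zero_mul]
    exact fun n hn => key (h.natDegree + 1) n hn (by omega)
  have hhmap : h.map PadicInt.toZMod = C (PadicInt.toZMod (h.coeff 0)) := by
    ext n
    rw [coeff_map, coeff_C]
    rcases Nat.eq_zero_or_pos n with rfl | hn
    · rw [if_pos rfl]
    · rw [if_neg (by omega)]
      exact hhcoeff n hn
  have hheval : ∀ y : ℤ_[p], PadicInt.toZMod (h.eval y) = PadicInt.toZMod (h.coeff 0) := by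
    intro y
    rw [toZMod_eval, hhmap, eval_C]
  have hβh : ‖h.eval β‖ = 1 := by
    have h2 := congrArg (eval β) (congrArg derivative hfac)
    simp only [derivative_mul, derivative_sub, derivative_X, derivative_C, sub_zero, mul_one,
      eval_add, eval_mul, eval_sub, eval_X, eval_C, sub_self, mul_zero, zero_add] at h2
    rw [← h2]
    exact hnormder β
  have hh0 : PadicInt.toZMod (h.coeff 0) ≠ 0 := by
    intro hcon
    have h4 := hheval β
    rw [hcon] at h4
    have h5 : ‖h.eval β‖ < 1 := norm_lt_one_of h4
    rw [hβh] at h5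
    exact lt_irrefl _ h5
  have hhnorm : ∀ y : ℤ_[p], ‖h.eval y‖ = 1 := by
    intro y
    refine norm_eq_one ?_
    rw [hheval y]
    exact hh0
  refine ⟨β, fun y => ?_⟩
  rw [heval y, norm_mul, PadicInt.norm_p]
  congr 1
  have h3 : g.eval y = h.eval y * (y - β) := by
    conv_lhs => rw [hfac]
    simp [eval_mul, eval_sub]
  rw [h3, norm_mul, hhnorm y, one_mul]

end StationaryPhaseAux

open StationaryPhaseAux in
/-- The `p`-adic stationary phase formula for a univariate polynomial
`f ∈ ℤ_p[x] \ pℤ_p[x]`: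
`Z(s,f) = p⁻¹ ν(f̄) + δ(f̄) (1-p⁻¹)p^{-1-s}/(1-p^{-1-s}) + Σ_{ξ∈S} p^{-1-e_ξ s} Z(s,f_ξ)`,
where `S` is the set of roots of `f̄` of multiplicity `≥ 2`, and for each such `ξ` the
dilatation satisfies `p^{e_ξ} f_ξ(x) = f(ξ + px)` with `f_ξ ∉ pℤ_p[x]`. -/
theorem stationary_phase_formula (p : ℕ) [Fact p.Prime]
    (μ : Measure ℤ_[p]) [μ.IsAddHaarMeasure] (hμ : μ Set.univ = 1)
    (f : Polynomial ℤ_[p]) (hf0 : f.map (PadicInt.toZMod) ≠ 0) (hfc : 0 < f.natDegree)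
    (e : ZMod p → ℕ) (F : ZMod p → Polynomial ℤ_[p])
    (hF : ∀ ξ : ZMod p, 2 ≤ (f.map (PadicInt.toZMod)).rootMultiplicity ξ →
      C ((p : ℤ_[p]) ^ e ξ) * F ξ = f.comp (C ((ξ.val : ℤ_[p])) + C (p : ℤ_[p]) * X) ∧
        (F ξ).map (PadicInt.toZMod) ≠ 0)
    (s : ℂ) (hs : 0 < s.re) :
    ∫ x : ℤ_[p], ((‖f.eval x‖ : ℝ) : ℂ) ^ s ∂μ
      = (p : ℂ)⁻¹ *
          (Nat.card {z : ZMod p // (f.map (PadicInt.toZMod)).eval z ≠ 0} : ℂ)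
        + (Nat.card {z : ZMod p // (f.map (PadicInt.toZMod)).eval z = 0 ∧
              (derivative (f.map (PadicInt.toZMod))).eval z ≠ 0} : ℂ) *
            ((1 - (p : ℂ)⁻¹) * (p : ℂ) ^ (-1 - s) / (1 - (p : ℂ) ^ (-1 - s)))
        + ∑ ξ ∈ Finset.univ.filter
            (fun ξ : ZMod p => 2 ≤ (f.map (PadicInt.toZMod)).rootMultiplicity ξ),
            (p : ℂ) ^ (-1 - (e ξ : ℂ) * s) *
              ∫ x : ℤ_[p], ((‖(F ξ).eval x‖ : ℝ) : ℂ) ^ s ∂μ := by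
  classical
  haveI : IsFiniteMeasure μ := ⟨by rw [hμ]; exact ENNReal.one_lt_top⟩
  have hp : Fact p.Prime := inferInstance
  have hp0C : ((p : ℂ)) ≠ 0 := Nat.cast_ne_zero.mpr hp.1.ne_zero
  set fb := f.map (PadicInt.toZMod) with hfb
  set g : ℤ_[p] → ℂ := fun x => ((‖f.eval x‖ : ℝ) : ℂ) ^ s with hg
  have hgc : Continuous g :=
    (Complex.continuous_ofReal_cpow_const hs).comp (continuous_norm.comp f.continuous)
  set J : ZMod p → ℂ := fun a => ∫ y, g (((a.val : ℤ_[p])) + (p : ℤ_[p]) * y) ∂μ with hJ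
  have hkey : ∑ a : ZMod p, J a = (p : ℝ) • ∫ x, g x ∂μ :=
    integral_classes μ hμ g hgc
  have hP3iff : ∀ ξ : ZMod p,
      (2 ≤ fb.rootMultiplicity ξ) ↔ (fb.eval ξ = 0 ∧ (derivative fb).eval ξ = 0) := by
    intro ξ
    have h2 : (2 ≤ fb.rootMultiplicity ξ) ↔ 1 < fb.rootMultiplicity ξ := Iff.rfl
    rw [h2, one_lt_rootMultiplicity_iff_isRoot hf0]
    rfl
  -- the three class values
  have hJ1 : ∀ a : ZMod p, fb.eval a ≠ 0 → J a = 1 := by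
    intro a ha
    have hval : ∀ y : ℤ_[p], g (((a.val : ℤ_[p])) + (p : ℤ_[p]) * y) = 1 := by
      intro y
      have hz : PadicInt.toZMod (((a.val : ℤ_[p])) + (p : ℤ_[p]) * y) = a := toZMod_T a y
      have hnorm : ‖f.eval (((a.val : ℤ_[p])) + (p : ℤ_[p]) * y)‖ = 1 := by
        apply norm_eq_one
        rw [toZMod_eval, hz]
        exact ha
      simp only [hg, hnorm, Complex.ofReal_one, Complex.one_cpow]
    rw [hJ]
    simp only [hval]
    rw [integral_const, measureReal_def, hμ]
    simp
  have hIbase := integral_norm_cpow μ hμ s hs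
  have hJ2 : ∀ a : ZMod p, fb.eval a = 0 → (derivative fb).eval a ≠ 0 →
      J a = ((((p : ℝ)⁻¹ : ℝ)) : ℂ) ^ s * ((1 - (p : ℂ)⁻¹) / (1 - (p : ℂ) ^ (-1 - s))) := by
    intro a h0 h1
    obtain ⟨β, hβ⟩ := simple_root_norm f a h0 h1
    rw [hJ]
    calc ∫ y, g (((a.val : ℤ_[p])) + (p : ℤ_[p]) * y) ∂μ
        = ∫ y, ((((p : ℝ)⁻¹ : ℝ)) : ℂ) ^ s * ((‖y - β‖ : ℝ) : ℂ) ^ s ∂μ := by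
          refine integral_congr_ae (Filter.Eventually.of_forall fun y => ?_)
          simp only [hg]
          rw [hβ y, Complex.ofReal_mul,
            Complex.mul_cpow_ofReal_nonneg (by positivity) (norm_nonneg _)]
      _ = ((((p : ℝ)⁻¹ : ℝ)) : ℂ) ^ s * ∫ y, ((‖y - β‖ : ℝ) : ℂ) ^ s ∂μ :=
          integral_const_mul _ _
      _ = ((((p : ℝ)⁻¹ : ℝ)) : ℂ) ^ s * ((1 - (p : ℂ)⁻¹) / (1 - (p : ℂ) ^ (-1 - s))) := by
          rw [integral_sub_right_eq_self (fun y : ℤ_[p] => ((‖y‖ : ℝ) : ℂ) ^ s) β, hIbase]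
  have hJ3 : ∀ ξ : ZMod p, (2 ≤ fb.rootMultiplicity ξ) →
      J ξ = ((((p : ℝ)⁻¹ ^ (e ξ) : ℝ)) : ℂ) ^ s
          * ∫ x, ((‖(F ξ).eval x‖ : ℝ) : ℂ) ^ s ∂μ := by
    intro ξ hξ
    obtain ⟨hid, -⟩ := hF ξ hξ
    have heval : ∀ y : ℤ_[p], f.eval (((ξ.val : ℤ_[p])) + (p : ℤ_[p]) * y)
        = (p : ℤ_[p]) ^ (e ξ) * (F ξ).eval y := by
      intro y
      have h := congrArg (eval y) hid
      simp only [eval_mul, eval_C, eval_comp, eval_add, eval_X] at h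
      exact h.symm
    rw [hJ]
    calc ∫ y, g (((ξ.val : ℤ_[p])) + (p : ℤ_[p]) * y) ∂μ
        = ∫ y, ((((p : ℝ)⁻¹ ^ (e ξ) : ℝ)) : ℂ) ^ s * ((‖(F ξ).eval y‖ : ℝ) : ℂ) ^ s ∂μ := by
          refine integral_congr_ae (Filter.Eventually.of_forall fun y => ?_)
          simp only [hg]
          rw [heval y, norm_mul, norm_pow, PadicInt.norm_p,
            Complex.ofReal_mul,
            Complex.mul_cpow_ofReal_nonneg (by positivity) (norm_nonneg _)]
      _ = _ := integral_const_mul _ _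
  -- split the sum over residues into three classes
  set P1 : ZMod p → Prop := fun ξ => fb.eval ξ ≠ 0 with hP1
  have hsplit1 := Finset.sum_filter_add_sum_filter_not Finset.univ P1 J
  set s2 : Finset (ZMod p) := Finset.univ.filter (fun ξ => ¬ P1 ξ) with hs2
  have hsplit2 := Finset.sum_filter_add_sum_filter_not s2
    (fun ξ => (derivative fb).eval ξ ≠ 0) J
  have hfilt2 : s2.filter (fun ξ => (derivative fb).eval ξ ≠ 0)
      = Finset.univ.filter (fun ξ => fb.eval ξ = 0 ∧ (derivative fb).eval ξ ≠ 0) := by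
    rw [hs2, Finset.filter_filter]
    exact Finset.filter_congr fun ξ _ => by simp [hP1, not_not]
  have hfilt3 : s2.filter (fun ξ => ¬ ((derivative fb).eval ξ ≠ 0))
      = Finset.univ.filter (fun ξ => 2 ≤ fb.rootMultiplicity ξ) := by
    rw [hs2, Finset.filter_filter]
    refine Finset.filter_congr fun ξ _ => ?_
    simp only [hP1, not_not]
    rw [hP3iff ξ]
  have hsum1 : ∑ ξ ∈ Finset.univ.filter P1, J ξ = ((Finset.univ.filter P1).card : ℂ) := by
    rw [Finset.sum_congr rfl (fun ξ hξ => hJ1 ξ (by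
      have := (Finset.mem_filter.1 hξ).2
      simpa [hP1] using this))]
    simp
  have hsum2 : ∑ ξ ∈ s2.filter (fun ξ => (derivative fb).eval ξ ≠ 0), J ξ
      = ((Finset.univ.filter
            (fun ξ => fb.eval ξ = 0 ∧ (derivative fb).eval ξ ≠ 0)).card : ℂ)
        * (((((p : ℝ)⁻¹ : ℝ)) : ℂ) ^ s
            * ((1 - (p : ℂ)⁻¹) / (1 - (p : ℂ) ^ (-1 - s)))) := by
    rw [hfilt2]
    rw [Finset.sum_congr rfl (fun ξ hξ => by
      have h2 := (Finset.mem_filter.1 hξ).2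
      exact hJ2 ξ h2.1 h2.2)]
    rw [Finset.sum_const, nsmul_eq_mul]
  have hsum3 : ∑ ξ ∈ s2.filter (fun ξ => ¬ ((derivative fb).eval ξ ≠ 0)), J ξ
      = ∑ ξ ∈ Finset.univ.filter (fun ξ => 2 ≤ fb.rootMultiplicity ξ),
          ((((p : ℝ)⁻¹ ^ (e ξ) : ℝ)) : ℂ) ^ s
            * ∫ x, ((‖(F ξ).eval x‖ : ℝ) : ℂ) ^ s ∂μ := by
    rw [hfilt3]
    exact Finset.sum_congr rfl fun ξ hξ => hJ3 ξ (Finset.mem_filter.1 hξ).2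
  have htotal : ∑ a : ZMod p, J a
      = ((Finset.univ.filter P1).card : ℂ)
        + ((Finset.univ.filter
              (fun ξ => fb.eval ξ = 0 ∧ (derivative fb).eval ξ ≠ 0)).card : ℂ)
          * (((((p : ℝ)⁻¹ : ℝ)) : ℂ) ^ s
              * ((1 - (p : ℂ)⁻¹) / (1 - (p : ℂ) ^ (-1 - s))))
        + ∑ ξ ∈ Finset.univ.filter (fun ξ => 2 ≤ fb.rootMultiplicity ξ),
            ((((p : ℝ)⁻¹ ^ (e ξ) : ℝ)) : ℂ) ^ s
              * ∫ x, ((‖(F ξ).eval x‖ : ℝ) : ℂ) ^ s ∂μ := by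
    calc ∑ a : ZMod p, J a
        = ∑ ξ ∈ Finset.univ.filter P1, J ξ + ∑ ξ ∈ s2, J ξ := hsplit1.symm
      _ = ∑ ξ ∈ Finset.univ.filter P1, J ξ
            + (∑ ξ ∈ s2.filter (fun ξ => (derivative fb).eval ξ ≠ 0), J ξ
              + ∑ ξ ∈ s2.filter (fun ξ => ¬ ((derivative fb).eval ξ ≠ 0)), J ξ) := by
          rw [hsplit2]
      _ = _ := by rw [hsum1, hsum2, hsum3]; ring
  have hZ : ∫ x, g x ∂μ = (p : ℂ)⁻¹ * ∑ a : ZMod p, J a := by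
    have hsm : (p : ℝ) • (∫ x, g x ∂μ) = (p : ℂ) * ∫ x, g x ∂μ := by
      rw [Complex.real_smul, Complex.ofReal_natCast]
    calc ∫ x, g x ∂μ
        = (p : ℂ)⁻¹ * ((p : ℂ) * ∫ x, g x ∂μ) := by
          rw [← mul_assoc, inv_mul_cancel₀ hp0C, one_mul]
      _ = (p : ℂ)⁻¹ * ∑ a : ZMod p, J a := by rw [← hsm, ← hkey]
  have hcard1 : ((Finset.univ.filter P1).card : ℂ)
      = (Nat.card {z : ZMod p // fb.eval z ≠ 0} : ℂ) := by
    rw [Nat.card_eq_fintype_card, Fintype.card_subtype]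
  have hcard2 : ((Finset.univ.filter
        (fun ξ => fb.eval ξ = 0 ∧ (derivative fb).eval ξ ≠ 0)).card : ℂ)
      = (Nat.card {z : ZMod p // fb.eval z = 0 ∧ (derivative fb).eval z ≠ 0} : ℂ) := by
    rw [Nat.card_eq_fintype_card, Fintype.card_subtype]
  have hq1 : ((p : ℂ)) ^ (-1 - s) = (p : ℂ)⁻¹ * ((((p : ℝ)⁻¹ : ℝ)) : ℂ) ^ s := by
    rw [cpow_neg_one_sub, cpow_key_q]
  show ∫ x, g x ∂μ = _
  rw [hZ, htotal, mul_add, mul_add]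
  congr 1
  · congr 1
    · rw [hcard1]
    · rw [← hcard2, hq1]
      ring
  · rw [Finset.mul_sum]
    refine Finset.sum_congr rfl fun ξ hξ => ?_
    rw [cpow_neg_one_sub_nat s (e ξ), cpow_ofReal_pow _ (by positivity) s (e ξ), cpow_key_q]
    ring
end

section
/- Let f(x) = (x − α_1)^{e_1}(x − α_2)^{e_2} with α_1, α_2 ∈ ℤ_p and v_p(α_1 − α_2) = 0. Then for Re(s) > 0, Z(s,f) = p^{−1}(p − 2) + p^{−1−e_1 s}(1 − p^{−1})/(1 − p^{−1−e_1 s}) + p^{−1−e_2 s}(1 − p^{−1})/(1 − p^{−1−e_2 s}) provided e_1, e_2 ≥ 1 (interpreting each term via the geometric series formula). -/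
/-!
The residue classes `α₁ + pℤ_p` and `α₂ + pℤ_p` are distinct, each of measure `1/p`, and `|f| = 1`
on the rest of `ℤ_p`. On `α + pℤ_p` only one factor of `f` is not a unit, so `|f(x)| = |x - α|^e`.
Up to its null centre this class is the disjoint union of the spheres `|x - α| = p^{-n}`, `n ≥ 1`,
of measure `(1 - 1/p) p^{-n}`, since the closed ball of radius `p^{-n}` is the kernel of reduction
mod `p^n`, of index `p^n`. Summing gives a geometric series with ratio `p^{-1-es}`.
-/

open MeasureTheory

open Metric

lemma integrable_ofReal_cpow_of_continuous {X : Type*} [TopologicalSpace X] [CompactSpace X]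
    [MeasurableSpace X] [OpensMeasurableSpace X] (μ : Measure X) [IsFiniteMeasure μ]
    {f : X → ℝ} (hf : Continuous f) {s : ℂ} (hs : 0 < s.re) :
    Integrable (fun x ↦ ((f x : ℝ) : ℂ) ^ s) μ :=
  ((Complex.continuous_ofReal_cpow_const hs).comp hf).integrable_of_hasCompactSupport
    (isClosed_tsupport _).isCompact

namespace PadicInt

variable {p : ℕ} [Fact p.Prime]

lemma closedBall_zero_zpow_eq_ker_toZModPow (n : ℕ) :
    closedBall (0 : ℤ_[p]) ((p : ℝ) ^ (-(n : ℤ))) =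
      ((toZModPow n : ℤ_[p] →+* ZMod (p ^ n)).toAddMonoidHom.ker : Set ℤ_[p]) := by
  ext x
  rw [mem_closedBall_zero_iff, norm_le_pow_iff_mem_span_pow, ← ker_toZModPow]
  rfl

lemma index_ker_toZModPow (n : ℕ) :
    (toZModPow n : ℤ_[p] →+* ZMod (p ^ n)).toAddMonoidHom.ker.index = p ^ n := by
  rw [AddSubgroup.index_ker, AddMonoidHom.range_eq_top.2 (ZMod.ringHom_surjective _),
    AddSubgroup.card_top, Nat.card_zmod]

instance (n : ℕ) : (toZModPow n : ℤ_[p] →+* ZMod (p ^ n)).toAddMonoidHom.ker.FiniteIndex :=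
  ⟨by rw [index_ker_toZModPow]; exact pow_ne_zero _ (Fact.out : p.Prime).ne_zero⟩

lemma ball_zpow_eq_closedBall (a : ℤ_[p]) (n : ℤ) :
    ball a ((p : ℝ) ^ n) = closedBall a ((p : ℝ) ^ (n - 1)) := by
  ext x
  rw [mem_ball, mem_closedBall, dist_eq_norm, norm_lt_pow_iff_norm_le_pow_sub_one]

lemma ball_one_sdiff_singleton_eq_iUnion_sphere (a : ℤ_[p]) :
    ball a 1 \ {a} = ⋃ n : ℕ, sphere a ((p : ℝ) ^ (-((n + 1 : ℕ) : ℤ))) := by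
  have hp : (1 : ℝ) < p := by exact_mod_cast (Fact.out : p.Prime).one_lt
  ext x
  simp only [Set.mem_sdiff, mem_ball, Set.mem_singleton_iff, Set.mem_iUnion, mem_sphere,
    dist_eq_norm, ← sub_eq_zero (a := x)]
  constructor
  · rintro ⟨hlt, hne⟩
    have hv := norm_eq_zpow_neg_valuation hne
    rw [hv, zpow_lt_one_iff_right₀ hp] at hlt
    exact ⟨(x - a).valuation - 1, by rw [hv]; congr 1; omega⟩
  · rintro ⟨n, hn⟩
    refine ⟨?_, fun h ↦ ?_⟩
    · rw [hn, zpow_lt_one_iff_right₀ hp]; omega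
    · rw [h, norm_zero] at hn; exact (zpow_pos (by positivity) _).ne hn

lemma ofReal_norm_sub_pow_cpow_of_mem_sphere {a x : ℤ_[p]} {n : ℕ}
    (hx : x ∈ sphere a ((p : ℝ) ^ (-(n : ℤ)))) (e : ℕ) (s : ℂ) :
    ((‖x - a‖ ^ e : ℝ) : ℂ) ^ s = ((p : ℂ) ^ (-(e * s))) ^ n := by
  rw [mem_sphere, dist_eq_norm] at hx
  have harg : ((p ^ (n * e) : ℕ) : ℂ).arg ≠ Real.pi := by
    rw [Complex.natCast_arg]; exact Real.pi_pos.ne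
  rw [hx, zpow_neg, zpow_natCast, inv_pow, ← pow_mul, ← Nat.cast_pow, Complex.ofReal_inv,
    Complex.ofReal_natCast, Complex.inv_cpow _ _ harg, Nat.cast_pow,
    ← Complex.natCast_cpow_natCast_mul, ← Complex.cpow_neg, ← Complex.cpow_nat_mul]
  congr 1
  push_cast
  ring

lemma norm_sub_eq_one_of_mem_ball {a b x : ℤ_[p]} (hab : ‖a - b‖ = 1) (hx : x ∈ ball a 1) :
    ‖x - b‖ = 1 := by
  rw [mem_ball, dist_eq_norm] at hx
  rw [← sub_add_sub_cancel x a b, norm_add_eq_max_of_ne (by rw [hab]; exact hx.ne), hab,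
    max_eq_right hx.le]

lemma norm_sub_eq_one_of_notMem_ball {a x : ℤ_[p]} (hx : x ∉ ball a 1) : ‖x - a‖ = 1 := by
  rw [mem_ball, dist_eq_norm, not_lt] at hx
  exact (norm_le_one _).antisymm hx

lemma disjoint_ball_one_of_norm_sub_eq_one {a b : ℤ_[p]} (hab : ‖a - b‖ = 1) :
    Disjoint (ball a 1) (ball b 1) :=
  Set.disjoint_left.2 fun _ ha hb ↦ (mem_ball_iff_norm.1 hb).ne (norm_sub_eq_one_of_mem_ball hab ha)

variable (μ : Measure ℤ_[p]) [μ.IsAddHaarMeasure]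

lemma pow_mul_measure_closedBall (a : ℤ_[p]) (n : ℕ) :
    (p : ENNReal) ^ n * μ (closedBall a ((p : ℝ) ^ (-(n : ℤ)))) = μ Set.univ := by
  rw [Measure.addHaar_closedBall_center, closedBall_zero_zpow_eq_ker_toZModPow,
    ← AddSubgroup.index_mul_measure _ (closedBall_zero_zpow_eq_ker_toZModPow (p := p) n ▸
      measurableSet_closedBall) μ, index_ker_toZModPow, Nat.cast_pow]

variable [IsProbabilityMeasure μ]

lemma measureReal_closedBall (a : ℤ_[p]) (n : ℕ) :
    μ.real (closedBall a ((p : ℝ) ^ (-(n : ℤ)))) = (p : ℝ) ^ (-(n : ℤ)) := by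
  have h := pow_mul_measure_closedBall μ a n
  rw [measure_univ, mul_comm] at h
  rw [measureReal_def, ENNReal.eq_inv_of_mul_eq_one_left h, ENNReal.toReal_inv,
    ENNReal.toReal_pow, ENNReal.toReal_natCast, zpow_neg, zpow_natCast]

lemma measureReal_ball_one (a : ℤ_[p]) : μ.real (ball a 1) = (p : ℝ)⁻¹ := by
  rw [← zpow_zero (p : ℝ), ball_zpow_eq_closedBall, zero_sub, ← Nat.cast_one,
    measureReal_closedBall, Nat.cast_one, zpow_neg_one]

lemma measureReal_compl_ball_one_union {a b : ℤ_[p]} (hab : ‖a - b‖ = 1) :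
    μ.real (ball a 1 ∪ ball b 1)ᶜ = 1 - 2 * (p : ℝ)⁻¹ := by
  rw [measureReal_compl (measurableSet_ball.union measurableSet_ball),
    measureReal_union (disjoint_ball_one_of_norm_sub_eq_one hab) measurableSet_ball,
    measureReal_ball_one, measureReal_ball_one, probReal_univ]
  ring

lemma measureReal_sphere (a : ℤ_[p]) (n : ℕ) :
    μ.real (sphere a ((p : ℝ) ^ (-(n : ℤ)))) = (1 - (p : ℝ)⁻¹) * (p : ℝ) ^ (-(n : ℤ)) := by
  have hp : (p : ℝ) ≠ 0 := by exact_mod_cast (Fact.out : p.Prime).ne_zero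
  rw [← closedBall_sdiff_ball, measureReal_sdiff ball_subset_closedBall measurableSet_ball,
    ball_zpow_eq_closedBall, show -(n : ℤ) - 1 = -((n + 1 : ℕ) : ℤ) by push_cast; ring,
    measureReal_closedBall, measureReal_closedBall, zpow_neg, zpow_neg, zpow_natCast,
    zpow_natCast, pow_succ]
  field_simp

lemma measure_singleton_eq_zero (a : ℤ_[p]) : μ {a} = 0 := by
  have hp : (1 : ℝ) < p := by exact_mod_cast (Fact.out : p.Prime).one_lt
  have hle (n : ℕ) : μ.real {a} ≤ (p : ℝ)⁻¹ ^ n := by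
    rw [inv_pow, ← zpow_natCast, ← zpow_neg, ← measureReal_closedBall μ a n]
    exact measureReal_mono (Set.singleton_subset_iff.2 (mem_closedBall_self (by positivity)))
  have hlim := tendsto_pow_atTop_nhds_zero_of_lt_one (by positivity) (inv_lt_one_of_one_lt₀ hp)
  exact (measureReal_eq_zero_iff).1 (le_antisymm (ge_of_tendsto' hlim hle) measureReal_nonneg)

lemma setIntegral_sphere_ofReal_norm_sub_pow_cpow (a : ℤ_[p]) (e n : ℕ) (s : ℂ) :
    ∫ x in sphere a ((p : ℝ) ^ (-(n : ℤ))), ((‖x - a‖ ^ e : ℝ) : ℂ) ^ s ∂μ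
      = (1 - (p : ℂ)⁻¹) * ((p : ℂ) ^ (-1 - e * s)) ^ n := by
  have hp : (p : ℂ) ≠ 0 := by exact_mod_cast (Fact.out : p.Prime).ne_zero
  rw [setIntegral_congr_fun isClosed_sphere.measurableSet
      (fun x hx ↦ ofReal_norm_sub_pow_cpow_of_mem_sphere hx e s),
    setIntegral_const, measureReal_sphere, sub_eq_add_neg (-1 : ℂ), Complex.cpow_add _ _ hp,
    Complex.cpow_neg_one, zpow_neg, zpow_natCast, Complex.real_smul]
  push_cast
  ring

lemma setIntegral_ball_one_ofReal_norm_sub_pow_cpow (a : ℤ_[p]) (e : ℕ) {s : ℂ}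
    (hs : 0 < s.re) :
    ∫ x in ball a 1, ((‖x - a‖ ^ e : ℝ) : ℂ) ^ s ∂μ
      = (p : ℂ) ^ (-1 - (e : ℂ) * s) * (1 - (p : ℂ)⁻¹) / (1 - (p : ℂ) ^ (-1 - (e : ℂ) * s)) := by
  have hp : (1 : ℝ) < p := by exact_mod_cast (Fact.out : p.Prime).one_lt
  have hratio : ‖(p : ℂ) ^ (-1 - (e : ℂ) * s)‖ < 1 := by
    rw [Complex.norm_natCast_cpow_of_pos (Fact.out : p.Prime).pos]
    refine Real.rpow_lt_one_of_one_lt_of_neg hp ?_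
    have : (-1 - (e : ℂ) * s).re = -1 - e * s.re := by simp
    rw [this]
    linarith [mul_nonneg (Nat.cast_nonneg e) hs.le]
  have hdisj : Pairwise (Function.onFun Disjoint
      fun n : ℕ ↦ sphere a ((p : ℝ) ^ (-((n + 1 : ℕ) : ℤ)))) := by
    intro m n hmn
    refine Set.disjoint_left.2 fun x hm hn ↦ hmn ?_
    have := zpow_right_injective₀ (by positivity) hp.ne'
      ((mem_sphere.1 hm).symm.trans (mem_sphere.1 hn))
    omega
  rw [← setIntegral_congr_set (sdiff_null_ae_eq_self (measure_singleton_eq_zero μ a)),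
    ball_one_sdiff_singleton_eq_iUnion_sphere, integral_iUnion
      (fun _ ↦ isClosed_sphere.measurableSet) hdisj
      (integrable_ofReal_cpow_of_continuous μ (by fun_prop) hs).integrableOn]
  simp_rw [setIntegral_sphere_ofReal_norm_sub_pow_cpow, pow_succ', tsum_mul_left,
    tsum_geometric_of_norm_lt_one hratio]
  ring

end PadicInt

open PadicInt in
theorem zeta_two_roots_general (p : ℕ) [Fact p.Prime]
    (μ : Measure ℤ_[p]) [μ.IsAddHaarMeasure] (hμ : μ Set.univ = 1)
    (α₁ α₂ : ℤ_[p]) (hα : ‖α₁ - α₂‖ = 1)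
    (e₁ e₂ : ℕ) (s : ℂ) (hs : 0 < s.re) :
    ∫ x : ℤ_[p], ((‖(x - α₁) ^ e₁ * (x - α₂) ^ e₂‖ : ℝ) : ℂ) ^ s ∂μ
      = (p : ℂ)⁻¹ * ((p : ℂ) - 2)
        + (p : ℂ) ^ (-1 - (e₁ : ℂ) * s) * (1 - (p : ℂ)⁻¹) / (1 - (p : ℂ) ^ (-1 - (e₁ : ℂ) * s))
        + (p : ℂ) ^ (-1 - (e₂ : ℂ) * s) * (1 - (p : ℂ)⁻¹) / (1 - (p : ℂ) ^ (-1 - (e₂ : ℂ) * s)) := by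
  have : IsProbabilityMeasure μ := ⟨hμ⟩
  set Z : ℤ_[p] → ℂ := fun x ↦ ((‖(x - α₁) ^ e₁ * (x - α₂) ^ e₂‖ : ℝ) : ℂ) ^ s
  have hZ : Integrable Z μ := integrable_ofReal_cpow_of_continuous μ (by fun_prop) hs
  have hdisj := disjoint_ball_one_of_norm_sub_eq_one hα
  have on_ball₁ : Set.EqOn Z (fun x ↦ ((‖x - α₁‖ ^ e₁ : ℝ) : ℂ) ^ s) (ball α₁ 1) := fun x hx ↦ by
    simp only [Z, norm_mul, norm_pow, norm_sub_eq_one_of_mem_ball hα hx, one_pow, mul_one]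
  have on_ball₂ : Set.EqOn Z (fun x ↦ ((‖x - α₂‖ ^ e₂ : ℝ) : ℂ) ^ s) (ball α₂ 1) := fun x hx ↦ by
    simp only [Z, norm_mul, norm_pow, norm_sub_eq_one_of_mem_ball (norm_sub_rev α₂ α₁ ▸ hα) hx,
      one_pow, one_mul]
  have off_balls : Set.EqOn Z 1 (ball α₁ 1 ∪ ball α₂ 1)ᶜ := fun x hx ↦ by
    rw [Set.mem_compl_iff, Set.mem_union, not_or] at hx
    simp [Z, norm_sub_eq_one_of_notMem_ball hx.1, norm_sub_eq_one_of_notMem_ball hx.2]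
  rw [← integral_add_compl (measurableSet_ball.union measurableSet_ball) hZ,
    setIntegral_union hdisj measurableSet_ball hZ.integrableOn hZ.integrableOn,
    setIntegral_congr_fun measurableSet_ball on_ball₁,
    setIntegral_congr_fun measurableSet_ball on_ball₂,
    setIntegral_congr_fun (measurableSet_ball.union measurableSet_ball).compl off_balls,
    setIntegral_ball_one_ofReal_norm_sub_pow_cpow μ α₁ e₁ hs,
    setIntegral_ball_one_ofReal_norm_sub_pow_cpow μ α₂ e₂ hs,
    Pi.one_def, setIntegral_const, measureReal_compl_ball_one_union μ hα, Complex.real_smul,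
    mul_one]
  have hp : (p : ℂ) ≠ 0 := by exact_mod_cast (Fact.out : p.Prime).ne_zero
  push_cast
  rw [mul_sub (p : ℂ)⁻¹, inv_mul_cancel₀ hp]
  ring

/-- For `f(x) = (x - α₁)^{e₁} (x - α₂)^{e₂}` with `v_p(α₁ - α₂) = 0`,
`Z(s,f) = p⁻¹(p-2) + p^{-1-e₁s}(1-p⁻¹)/(1-p^{-1-e₁s}) + p^{-1-e₂s}(1-p⁻¹)/(1-p^{-1-e₂s})`. -/
theorem zeta_two_roots (p : ℕ) [Fact p.Prime]
    (μ : Measure ℤ_[p]) [μ.IsAddHaarMeasure] (hμ : μ Set.univ = 1)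
    (α₁ α₂ : ℤ_[p]) (hα : ‖α₁ - α₂‖ = 1)
    (e₁ e₂ : ℕ) (he₁ : 1 ≤ e₁) (he₂ : 1 ≤ e₂) (s : ℂ) (hs : 0 < s.re) :
    ∫ x : ℤ_[p], ((‖(x - α₁) ^ e₁ * (x - α₂) ^ e₂‖ : ℝ) : ℂ) ^ s ∂μ
      = (p : ℂ)⁻¹ * ((p : ℂ) - 2)
        + (p : ℂ) ^ (-1 - (e₁ : ℂ) * s) * (1 - (p : ℂ)⁻¹) / (1 - (p : ℂ) ^ (-1 - (e₁ : ℂ) * s))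
        + (p : ℂ) ^ (-1 - (e₂ : ℂ) * s) * (1 - (p : ℂ)⁻¹) / (1 - (p : ℂ) ^ (-1 - (e₂ : ℂ) * s)) :=
  zeta_two_roots_general p μ hμ α₁ α₂ hα e₁ e₂ s hs
end
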